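/- arXiv:2506.09684 — 2 statements merged into one kernel-verified Lean document; each statement's English description precedes it below -/
import Mathlib

section
/- Let d ≥ 1, σ > 0, let f̂ : ℝᵈ → ℝ be twice differentiable with ‖∇f̂(x)‖ ≤ B and ‖∇²f̂(x)‖_op ≤ G for all x ∈ ℝᵈ, let x₀ ∈ ℝᵈ with ∇f̂(x₀) ≠ 0, and let w ∈ ℝᵈ be a nonzero vector. Define L(z) := ⟨∇f̂(x₀), (I − η_w)z⟩, R(z) := f̂(x₀ + (I − η_w)z) − f̂(x₀) − L(z), and ζ(z) := R(z) − E_{z' ∼ γ_σ}[R(z')]. Then E_{z ∼ γ_σ}[L(z)·ζ(z)] ≤ √(E[L(z)²]) · √(E[ζ(z)²]) ≤ σ·‖∇f̂(x₀)‖·sin θ(∇f̂(x₀), w) · √2 · G d σ². -/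
open MeasureTheory ProbabilityTheory InnerProductGeometry
open scoped RealInnerProductSpace

/-- The isotropic Gaussian measure on `ℝᵈ`: the law of a random vector whose `d`
coordinates are i.i.d. `N(0, σ²)`. -/
noncomputable def gaussE (d : ℕ) (σ : ℝ) : Measure (EuclideanSpace ℝ (Fin d)) :=
  (Measure.pi fun _ : Fin d => gaussianReal 0 (Real.toNNReal (σ ^ 2))).map
    (MeasurableEquiv.toLp 2 (Fin d → ℝ))

/-- `(I − η_w) z`, where `η_w = w wᵀ / ‖w‖²` is the orthogonal projection onto `span {w}`:
the orthogonal projection of `z` onto the hyperplane orthogonal to `w`. -/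
noncomputable def projPerp {d : ℕ} (w z : EuclideanSpace ℝ (Fin d)) :
    EuclideanSpace ℝ (Fin d) :=
  z - ((⟪w, z⟫ : ℝ) / ‖w‖ ^ 2) • w

/-!
The linear part `L z = ⟪∇f̂(x₀), (I − η_w) z⟫ = ⟪(I − η_w) ∇f̂(x₀), z⟫` is a centred Gaussian of
variance `σ² ‖(I − η_w) ∇f̂(x₀)‖² = σ² ‖∇f̂(x₀)‖² sin² θ`. Taylor's theorem with the Hessian bound
gives `|R z| ≤ G/2 ‖(I − η_w) z‖² ≤ G/2 ‖z‖²`, hence `E[ζ²] = Var R ≤ E[R²] ≤ G²/4 · E‖z‖⁴`, and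
`E‖z‖⁴ ≤ d ∑ᵢ E[zᵢ⁴] = 3 d² σ⁴` since the fourth Gaussian moment is `3σ⁴`. The first inequality
is Cauchy–Schwarz, and `3/4 ≤ 2` leaves room for the constant `√2`.
-/

open Real Set
open scoped NNReal

lemma hasDerivAt_mul_exp_mul_sq_div_two {p : ℝ → ℝ} {p' : ℝ} (v t : ℝ) (hp : HasDerivAt p p' t) :
    HasDerivAt (fun t ↦ p t * rexp (v * t ^ 2 / 2))
      ((p' + v * t * p t) * rexp (v * t ^ 2 / 2)) t := by
  have he := (((hasDerivAt_pow 2 t).const_mul v).div_const 2).exp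
  refine (hp.fun_mul he).congr_deriv ?_
  push_cast
  ring

lemma iteratedDeriv_four_exp_mul_sq_div_two_zero (v : ℝ) :
    iteratedDeriv 4 (fun t ↦ rexp (v * t ^ 2 / 2)) 0 = 3 * v ^ 2 := by
  have h1 : deriv (fun t ↦ 1 * rexp (v * t ^ 2 / 2)) = fun t ↦ v * t * rexp (v * t ^ 2 / 2) :=
    funext fun t ↦
      (hasDerivAt_mul_exp_mul_sq_div_two v t (hasDerivAt_const t 1)).deriv.trans (by ring)
  have h2 : deriv (fun t ↦ v * t * rexp (v * t ^ 2 / 2)) =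
      fun t ↦ (v + v ^ 2 * t ^ 2) * rexp (v * t ^ 2 / 2) :=
    funext fun t ↦ (hasDerivAt_mul_exp_mul_sq_div_two v t
      ((hasDerivAt_id t).const_mul v)).deriv.trans (by simp only [id]; ring)
  have h3 : deriv (fun t ↦ (v + v ^ 2 * t ^ 2) * rexp (v * t ^ 2 / 2)) =
      fun t ↦ (3 * v ^ 2 * t + v ^ 3 * t ^ 3) * rexp (v * t ^ 2 / 2) :=
    funext fun t ↦ (hasDerivAt_mul_exp_mul_sq_div_two v t
      (((hasDerivAt_pow 2 t).const_mul (v ^ 2)).const_add v)).deriv.trans (by push_cast; ring)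
  have h4 : deriv (fun t ↦ (3 * v ^ 2 * t + v ^ 3 * t ^ 3) * rexp (v * t ^ 2 / 2)) =
      fun t ↦ (3 * v ^ 2 + 6 * v ^ 3 * t ^ 2 + v ^ 4 * t ^ 4) * rexp (v * t ^ 2 / 2) :=
    funext fun t ↦ (hasDerivAt_mul_exp_mul_sq_div_two v t
      (((hasDerivAt_id t).const_mul (3 * v ^ 2)).fun_add
        ((hasDerivAt_pow 3 t).const_mul (v ^ 3)))).deriv.trans (by simp only [id]; ring)
  simp only [iteratedDeriv_succ, iteratedDeriv_zero]
  rw [show (fun t ↦ rexp (v * t ^ 2 / 2)) = fun t ↦ 1 * rexp (v * t ^ 2 / 2) by simp,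
    h1, h2, h3, h4]
  simp

lemma integral_pow_four_gaussianReal (v : ℝ≥0) :
    ∫ x, x ^ 4 ∂gaussianReal 0 v = 3 * (v : ℝ) ^ 2 := by
  calc ∫ x, x ^ 4 ∂gaussianReal 0 v
      = iteratedDeriv 4 (mgf (fun x ↦ x) (gaussianReal 0 v)) 0 := by
        rw [iteratedDeriv_mgf_zero] <;> simp
    _ = 3 * (v : ℝ) ^ 2 := by
        rw [mgf_fun_id_gaussianReal]
        simpa using iteratedDeriv_four_exp_mul_sq_div_two_zero v

lemma integrable_pow_four_gaussianReal (v : ℝ≥0) :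
    Integrable (fun t : ℝ ↦ t ^ 4) (gaussianReal 0 v) := by
  simpa [Even.pow_abs (by decide : Even 4)] using
    (memLp_id_gaussianReal 4).integrable_norm_pow (by norm_num)

lemma integral_norm_pow_four_pi_le {ι : Type*} [Fintype ι] (ν : Measure ℝ) [IsProbabilityMeasure ν]
    (hν : Integrable (fun t ↦ t ^ 4) ν) :
    ∫ x, ‖WithLp.toLp 2 x‖ ^ 4 ∂(Measure.pi fun _ : ι ↦ ν) ≤
      Fintype.card ι ^ 2 * ∫ t, t ^ 4 ∂ν := by
  have hpt (x : ι → ℝ) : ‖WithLp.toLp 2 x‖ ^ 4 ≤ Fintype.card ι * ∑ i, x i ^ 4 := by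
    have := sq_sum_le_card_mul_sum_sq (s := Finset.univ) (f := fun i ↦ x i ^ 2)
    rw [show ‖WithLp.toLp 2 x‖ ^ 4 = (‖WithLp.toLp 2 x‖ ^ 2) ^ 2 by ring,
      EuclideanSpace.real_norm_sq_eq]
    simpa [← pow_mul] using this
  have hint (i : ι) : Integrable (fun x : ι → ℝ ↦ x i ^ 4) (Measure.pi fun _ : ι ↦ ν) :=
    integrable_comp_eval (f := fun t ↦ t ^ 4) hν
  calc ∫ x, ‖WithLp.toLp 2 x‖ ^ 4 ∂(Measure.pi fun _ : ι ↦ ν)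
      ≤ ∫ x, Fintype.card ι * ∑ i, x i ^ 4 ∂(Measure.pi fun _ : ι ↦ ν) :=
        integral_mono_of_nonneg (.of_forall fun _ ↦ by positivity)
          ((integrable_finsetSum _ fun i _ ↦ hint i).const_mul _) (.of_forall hpt)
    _ = Fintype.card ι ^ 2 * ∫ t, t ^ 4 ∂ν := by
        rw [integral_const_mul, integral_finsetSum _ fun i _ ↦ hint i]
        simp_rw [integral_comp_eval (μ := fun _ : ι ↦ ν) (f := fun t ↦ t ^ 4)
          hν.aestronglyMeasurable]
        simp; ring

lemma gaussE_eq_map_stdGaussian (d : ℕ) (σ : ℝ) :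
    gaussE d σ = (stdGaussian (EuclideanSpace ℝ (Fin d))).map
      (σ • ContinuousLinearMap.id ℝ (EuclideanSpace ℝ (Fin d))) := by
  rw [← map_pi_eq_stdGaussian, Measure.map_map (by fun_prop) (by fun_prop)]
  have : (σ • ContinuousLinearMap.id ℝ (EuclideanSpace ℝ (Fin d))) ∘ WithLp.toLp 2 =
      WithLp.toLp 2 ∘ fun x i ↦ σ * x i := by ext; simp
  rw [this, ← Measure.map_map (by fun_prop) (by fun_prop), Measure.pi_map_pi (by fun_prop)]
  simp_rw [gaussianReal_map_const_mul, mul_zero, mul_one]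
  rw [gaussE, Real.toNNReal_of_nonneg (sq_nonneg σ)]
  rfl

instance isGaussian_gaussE (d : ℕ) (σ : ℝ) : IsGaussian (gaussE d σ) := by
  rw [gaussE_eq_map_stdGaussian]; infer_instance

lemma integral_inner_sq_gaussE (d : ℕ) (σ : ℝ) (a : EuclideanSpace ℝ (Fin d)) :
    ∫ z, ⟪a, z⟫ ^ 2 ∂gaussE d σ = σ ^ 2 * ‖a‖ ^ 2 := by
  have hstd : ∫ z, ⟪a, z⟫ ^ 2 ∂stdGaussian (EuclideanSpace ℝ (Fin d)) = ‖a‖ ^ 2 := by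
    have := covarianceBilin_apply (μ := stdGaussian (EuclideanSpace ℝ (Fin d)))
      IsGaussian.memLp_two_id a a
    rw [covarianceBilin_stdGaussian, innerSL_apply_apply, real_inner_self_eq_norm_sq] at this
    simpa [sq] using this.symm
  rw [gaussE_eq_map_stdGaussian, integral_map (by fun_prop) (by fun_prop)]
  simp [inner_smul_right, mul_pow, integral_const_mul, hstd]

lemma integrable_norm_pow_four_gaussE (d : ℕ) (σ : ℝ) :
    Integrable (fun z ↦ ‖z‖ ^ 4) (gaussE d σ) := by
  simpa using (IsGaussian.memLp_id (gaussE d σ) 4 (by norm_num)).integrable_norm_pow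
    (by norm_num)

lemma integral_norm_pow_four_gaussE_le (d : ℕ) (σ : ℝ) :
    ∫ z, ‖z‖ ^ 4 ∂gaussE d σ ≤ 3 * d ^ 2 * σ ^ 4 := by
  rw [gaussE, integral_map_equiv]
  calc _ ≤ _ := integral_norm_pow_four_pi_le _ (integrable_pow_four_gaussianReal _)
    _ = 3 * d ^ 2 * σ ^ 4 := by
      rw [integral_pow_four_gaussianReal, Real.coe_toNNReal _ (sq_nonneg σ)]; simp; ring

section QuadraticGrowth
variable {d : ℕ} {σ C : ℝ} {R : EuclideanSpace ℝ (Fin d) → ℝ}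

lemma sq_le_of_abs_le_mul_sq_norm (hRC : ∀ z, |R z| ≤ C * ‖z‖ ^ 2)
    (z : EuclideanSpace ℝ (Fin d)) : R z ^ 2 ≤ C ^ 2 * ‖z‖ ^ 4 := by
  calc R z ^ 2 = |R z| ^ 2 := (sq_abs _).symm
    _ ≤ (C * ‖z‖ ^ 2) ^ 2 := pow_le_pow_left₀ (abs_nonneg _) (hRC z) 2
    _ = C ^ 2 * ‖z‖ ^ 4 := by ring

lemma memLp_two_gaussE_of_abs_le (hR : AEStronglyMeasurable R (gaussE d σ))
    (hRC : ∀ z, |R z| ≤ C * ‖z‖ ^ 2) : MemLp R 2 (gaussE d σ) := by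
  rw [memLp_two_iff_integrable_sq hR]
  refine ((integrable_norm_pow_four_gaussE d σ).const_mul (C ^ 2)).mono' (hR.pow 2)
    (.of_forall fun z ↦ ?_)
  rw [Real.norm_of_nonneg (sq_nonneg _)]
  exact sq_le_of_abs_le_mul_sq_norm hRC z

lemma integral_sq_gaussE_le (hRC : ∀ z, |R z| ≤ C * ‖z‖ ^ 2) :
    ∫ z, R z ^ 2 ∂gaussE d σ ≤ 3 * C ^ 2 * d ^ 2 * σ ^ 4 :=
  calc ∫ z, R z ^ 2 ∂gaussE d σ ≤ ∫ z, C ^ 2 * ‖z‖ ^ 4 ∂gaussE d σ :=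
        integral_mono_of_nonneg (.of_forall fun _ ↦ sq_nonneg _)
          ((integrable_norm_pow_four_gaussE d σ).const_mul _)
          (.of_forall (sq_le_of_abs_le_mul_sq_norm hRC))
    _ ≤ C ^ 2 * (3 * d ^ 2 * σ ^ 4) := by
        rw [integral_const_mul]
        gcongr
        exact integral_norm_pow_four_gaussE_le d σ
    _ = 3 * C ^ 2 * d ^ 2 * σ ^ 4 := by ring

lemma integral_sq_sub_integral_gaussE_le (hR : AEStronglyMeasurable R (gaussE d σ))
    (hRC : ∀ z, |R z| ≤ C * ‖z‖ ^ 2) :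
    ∫ z, (R z - ∫ z', R z' ∂gaussE d σ) ^ 2 ∂gaussE d σ ≤ 3 * C ^ 2 * d ^ 2 * σ ^ 4 := by
  rw [← variance_eq_integral hR.aemeasurable]
  exact (variance_le_expectation_sq hR).trans (by simpa using integral_sq_gaussE_le hRC)

end QuadraticGrowth

section projPerp
variable {d : ℕ}

lemma projPerp_eq_starProjection (w z : EuclideanSpace ℝ (Fin d)) :
    projPerp w z = (ℝ ∙ w)ᗮ.starProjection z := by
  rw [Submodule.starProjection_orthogonal_val, Submodule.starProjection_singleton]
  rfl

lemma norm_projPerp_le (w z : EuclideanSpace ℝ (Fin d)) : ‖projPerp w z‖ ≤ ‖z‖ := by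
  rw [projPerp_eq_starProjection]
  exact Submodule.norm_starProjection_apply_le _ z

lemma inner_projPerp_right (w a z : EuclideanSpace ℝ (Fin d)) :
    ⟪a, projPerp w z⟫ = ⟪projPerp w a, z⟫ := by
  simp only [projPerp_eq_starProjection]
  exact (Submodule.inner_starProjection_left_eq_right _ a z).symm

lemma continuous_projPerp (w : EuclideanSpace ℝ (Fin d)) : Continuous (projPerp w) := by
  simp only [funext (projPerp_eq_starProjection w)]
  fun_prop

lemma norm_projPerp_eq_mul_sin (w g : EuclideanSpace ℝ (Fin d)) :
    ‖projPerp w g‖ = ‖g‖ * sin (angle g w) := by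
  rcases eq_or_ne w 0 with rfl | hw
  · simp [projPerp]
  have hw' : 0 < ‖w‖ := norm_pos_iff.2 hw
  have hsq : (‖projPerp w g‖ * ‖w‖) ^ 2 = (‖g‖ * ‖w‖) ^ 2 - ⟪g, w⟫ ^ 2 := by
    rw [mul_pow, projPerp, norm_sub_sq_real, norm_smul, real_inner_smul_right, real_inner_comm w g,
      Real.norm_eq_abs, mul_pow, sq_abs]
    field_simp
    ring
  have hsin := sin_angle_mul_norm_mul_norm g w
  rw [real_inner_self_eq_norm_sq, real_inner_self_eq_norm_sq, ← sq, ← mul_pow, ← hsq,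
    Real.sqrt_sq (by positivity)] at hsin
  exact mul_right_cancel₀ hw'.ne' (by linarith)

end projPerp

lemma norm_sub_sub_fderiv_le {E F : Type*} [NormedAddCommGroup E] [NormedSpace ℝ E]
    [NormedAddCommGroup F] [NormedSpace ℝ F] {f : E → F} {G : ℝ} (hf : Differentiable ℝ f)
    (hf' : Differentiable ℝ (fderiv ℝ f)) (hG : ∀ x, ‖fderiv ℝ (fderiv ℝ f) x‖ ≤ G) (x u : E) :
    ‖f (x + u) - f x - fderiv ℝ f x u‖ ≤ G / 2 * ‖u‖ ^ 2 := by
  -- Compare `t ↦ f (x + t • u) - f x - t • f' x u` with the barrier `t ↦ G/2 ‖u‖² t²` on `[0, 1]`.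
  have hlip (y : E) : ‖fderiv ℝ f y - fderiv ℝ f x‖ ≤ G * ‖y - x‖ :=
    convex_univ.norm_image_sub_le_of_norm_fderiv_le (fun a _ ↦ hf' a) (fun a _ ↦ hG a)
      trivial trivial
  have hφ (t : ℝ) : HasDerivAt (fun t : ℝ ↦ f (x + t • u) - f x - t • fderiv ℝ f x u)
      (fderiv ℝ f (x + t • u) u - fderiv ℝ f x u) t := by
    have hline : HasDerivAt (fun t : ℝ ↦ x + t • u) u t := by
      simpa using ((hasDerivAt_id t).smul_const u).const_add x
    simpa using (((hf _).hasFDerivAt.comp_hasDerivAt t hline).sub_const (f x)).fun_sub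
      ((hasDerivAt_id t).smul_const (fderiv ℝ f x u))
  have hB (t : ℝ) : HasDerivAt (fun t ↦ G / 2 * ‖u‖ ^ 2 * t ^ 2) (G * ‖u‖ ^ 2 * t) t := by
    refine ((hasDerivAt_pow 2 t).const_mul (G / 2 * ‖u‖ ^ 2)).congr_deriv ?_
    push_cast; ring
  have bound (t : ℝ) (ht : t ∈ Ico (0 : ℝ) 1) :
      ‖fderiv ℝ f (x + t • u) u - fderiv ℝ f x u‖ ≤ G * ‖u‖ ^ 2 * t := by
    calc ‖fderiv ℝ f (x + t • u) u - fderiv ℝ f x u‖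
        ≤ ‖fderiv ℝ f (x + t • u) - fderiv ℝ f x‖ * ‖u‖ := by
          rw [← sub_apply]; exact ContinuousLinearMap.le_opNorm _ u
      _ ≤ G * ‖t • u‖ * ‖u‖ := by
          gcongr; simpa using hlip (x + t • u)
      _ = G * ‖u‖ ^ 2 * t := by
          rw [norm_smul, Real.norm_of_nonneg ht.1]; ring
  simpa using image_norm_le_of_norm_deriv_right_le_deriv_boundary
    (fun t _ ↦ (hφ t).continuousAt.continuousWithinAt) (fun t _ ↦ (hφ t).hasDerivWithinAt)
    (by simp) hB bound (right_mem_Icc.2 zero_le_one)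

lemma abs_sub_sub_inner_gradient_le {F : Type*} [NormedAddCommGroup F] [InnerProductSpace ℝ F]
    [CompleteSpace F] {f : F → ℝ} {G : ℝ} (hf : Differentiable ℝ f)
    (hf' : Differentiable ℝ (fderiv ℝ f)) (hG : ∀ x, ‖fderiv ℝ (fderiv ℝ f) x‖ ≤ G) (x u : F) :
    |f (x + u) - f x - ⟪gradient f x, u⟫| ≤ G / 2 * ‖u‖ ^ 2 := by
  rw [← InnerProductSpace.toDual_apply_apply, toDual_gradient, ← Real.norm_eq_abs]
  exact norm_sub_sub_fderiv_le hf hf' hG x u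

lemma integral_mul_le_sqrt_mul_sqrt {α : Type*} [MeasurableSpace α] {μ : Measure α}
    {f g : α → ℝ} (hf : MemLp f 2 μ) (hg : MemLp g 2 μ) :
    ∫ a, f a * g a ∂μ ≤ √(∫ a, f a ^ 2 ∂μ) * √(∫ a, g a ^ 2 ∂μ) := by
  have hsq (h : α → ℝ) : (∫ a, ‖h a‖ ^ (2 : ℝ) ∂μ) ^ (1 / (2 : ℝ)) = √(∫ a, h a ^ 2 ∂μ) := by
    simp [Real.sqrt_eq_rpow]
  calc ∫ a, f a * g a ∂μ ≤ ∫ a, ‖f a‖ * ‖g a‖ ∂μ := by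
        simp_rw [← norm_mul]
        exact (Real.le_norm_self _).trans (norm_integral_le_integral_norm _)
    _ ≤ _ := integral_mul_norm_le_Lp_mul_Lq .two_two (by simpa using hf) (by simpa using hg)
    _ = _ := by rw [hsq, hsq]

theorem stmt8_general (d : ℕ) (σ G : ℝ) (hσ : 0 < σ)
    (f : EuclideanSpace ℝ (Fin d) → ℝ)
    (hf1 : Differentiable ℝ f) (hf2 : Differentiable ℝ (fderiv ℝ f))
    (hG : ∀ x, ‖fderiv ℝ (fderiv ℝ f) x‖ ≤ G)
    (x₀ : EuclideanSpace ℝ (Fin d))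
    (w : EuclideanSpace ℝ (Fin d))
    (L R ζ : EuclideanSpace ℝ (Fin d) → ℝ)
    (hL : ∀ z, L z = (⟪gradient f x₀, projPerp w z⟫ : ℝ))
    (hR : ∀ z, R z = f (x₀ + projPerp w z) - f x₀ - L z)
    (hζ : ∀ z, ζ z = R z - ∫ z', R z' ∂(gaussE d σ)) :
    (∫ z, L z * ζ z ∂(gaussE d σ))
      ≤ Real.sqrt (∫ z, (L z) ^ 2 ∂(gaussE d σ)) *
          Real.sqrt (∫ z, (ζ z) ^ 2 ∂(gaussE d σ)) ∧
    Real.sqrt (∫ z, (L z) ^ 2 ∂(gaussE d σ)) *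
        Real.sqrt (∫ z, (ζ z) ^ 2 ∂(gaussE d σ))
      ≤ σ * ‖gradient f x₀‖ * Real.sin (angle (gradient f x₀) w) *
          (Real.sqrt 2 * G * d * σ ^ 2) := by
  set a := projPerp w (gradient f x₀)
  have hLa : L = fun z ↦ ⟪a, z⟫ := funext fun z ↦ by rw [hL, inner_projPerp_right]
  have hG0 : 0 ≤ G := (norm_nonneg (fderiv ℝ (fderiv ℝ f) x₀)).trans (hG x₀)
  have hRle (z : EuclideanSpace ℝ (Fin d)) : |R z| ≤ G / 2 * ‖z‖ ^ 2 := by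
    rw [hR, hL]
    exact (abs_sub_sub_inner_gradient_le hf1 hf2 hG x₀ _).trans
      (by gcongr; exact norm_projPerp_le w z)
  have hRm : AEStronglyMeasurable R (gaussE d σ) := by
    have := hf1.continuous
    have := continuous_projPerp w
    rw [funext hR, hLa]
    fun_prop
  have hζ2 : MemLp ζ 2 (gaussE d σ) := by
    rw [funext hζ]
    exact (memLp_two_gaussE_of_abs_le hRm hRle).sub (memLp_const _)
  have hζle : ∫ z, ζ z ^ 2 ∂gaussE d σ ≤ (√2 * G * d * σ ^ 2) ^ 2 := by
    simp_rw [hζ]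
    refine (integral_sq_sub_integral_gaussE_le hRm hRle).trans ?_
    rw [mul_pow, mul_pow, mul_pow, Real.sq_sqrt zero_le_two]
    nlinarith [sq_nonneg (G * d * σ ^ 2)]
  refine ⟨integral_mul_le_sqrt_mul_sqrt (hLa ▸ IsGaussian.memLp_two_id.const_inner a) hζ2, ?_⟩
  rw [hLa, integral_inner_sq_gaussE, ← mul_pow, Real.sqrt_sq (by positivity),
    norm_projPerp_eq_mul_sin, ← mul_assoc]
  gcongr
  · exact mul_nonneg (by positivity) (sin_angle_nonneg _ _)
  · exact (Real.sqrt_le_sqrt hζle).trans_eq (Real.sqrt_sq (by positivity))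

/-- Cauchy–Schwarz bound on the cross term:
`E[L ζ] ≤ √(E[L²]) √(E[ζ²]) ≤ σ ‖∇f̂(x₀)‖ sin θ(∇f̂(x₀), w) · √2 G d σ²`. -/
theorem stmt8 (d : ℕ) (hd : 1 ≤ d) (σ B G : ℝ) (hσ : 0 < σ)
    (f : EuclideanSpace ℝ (Fin d) → ℝ)
    (hf1 : Differentiable ℝ f) (hf2 : Differentiable ℝ (fderiv ℝ f))
    (hB : ∀ x, ‖gradient f x‖ ≤ B)
    (hG : ∀ x, ‖fderiv ℝ (fderiv ℝ f) x‖ ≤ G)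
    (x₀ : EuclideanSpace ℝ (Fin d)) (hx₀ : gradient f x₀ ≠ 0)
    (w : EuclideanSpace ℝ (Fin d)) (hw : w ≠ 0)
    (L R ζ : EuclideanSpace ℝ (Fin d) → ℝ)
    (hL : ∀ z, L z = (⟪gradient f x₀, projPerp w z⟫ : ℝ))
    (hR : ∀ z, R z = f (x₀ + projPerp w z) - f x₀ - L z)
    (hζ : ∀ z, ζ z = R z - ∫ z', R z' ∂(gaussE d σ)) :
    (∫ z, L z * ζ z ∂(gaussE d σ))
      ≤ Real.sqrt (∫ z, (L z) ^ 2 ∂(gaussE d σ)) *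
          Real.sqrt (∫ z, (ζ z) ^ 2 ∂(gaussE d σ)) ∧
    Real.sqrt (∫ z, (L z) ^ 2 ∂(gaussE d σ)) *
        Real.sqrt (∫ z, (ζ z) ^ 2 ∂(gaussE d σ))
      ≤ σ * ‖gradient f x₀‖ * Real.sin (angle (gradient f x₀) w) *
          (Real.sqrt 2 * G * d * σ ^ 2) :=
  stmt8_general d σ G hσ f hf1 hf2 hG x₀ w L R ζ hL hR hζ
end

section
/- Fix n ≥ 1 and ε_x ∈ (0, 1], and define p(ε_x, ε_y) := (1 + n − nε_x − nε_y + nε_x ε_y) / ( ((n+1) − nε_x)·((n+1) − nε_y) ) for ε_y ∈ [0, 1]. Let H(ε_x, ε_y) := −(n+1)·p(ε_x, ε_y)·log p(ε_x, ε_y) be the Inv-Entropy of the corresponding parameterized model. If 0 ≤ ε_y < ε_y' ≤ 1 and p(ε_x, ε_y') < 1/e, then H(ε_x, ε_y) < H(ε_x, ε_y'); that is, for a fixed input perturbation level, larger output dispersion yields strictly larger Inv-Entropy. -/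
lemma negMulLog_strictMonoOn :
    StrictMonoOn (fun x : ℝ => -(x * Real.log x)) (Set.Icc 0 (Real.exp (-1))) := by
  apply strictMonoOn_of_deriv_pos (convex_Icc _ _)
  · exact Real.continuous_mul_log.neg.continuousOn
  · intro z hz
    rw [interior_Icc] at hz
    have hz0 : z ≠ 0 := ne_of_gt hz.1
    have hd : HasDerivAt (fun x : ℝ => -(x * Real.log x)) (-(Real.log z + 1)) z :=
      (Real.hasDerivAt_mul_log hz0).neg
    rw [hd.deriv]
    have hlog : Real.log z < -1 := by
      have := Real.log_lt_log hz.1 hz.2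
      simpa [Real.log_exp] using this
    linarith

/-- Monotonicity of Inv-Entropy in the output dispersion level: for fixed `ε_x ∈ (0,1]`,
if `ε_y < ε_y'` and `p(ε_x, ε_y') < 1/e`, then
`H(ε_x, ε_y) = −(n+1)·p·log p` is strictly smaller at `ε_y` than at `ε_y'`. -/
theorem stmt14 (n : ℕ) (hn : 1 ≤ n) (εx : ℝ) (hεx : εx ∈ Set.Ioc (0 : ℝ) 1)
    (p H : ℝ → ℝ)
    (hp : ∀ εy : ℝ, p εy = (1 + n - n * εx - n * εy + n * εx * εy) /
      (((n + 1 : ℝ) - n * εx) * ((n + 1 : ℝ) - n * εy)))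
    (hH : ∀ εy : ℝ, H εy = -((n + 1 : ℝ) * p εy * Real.log (p εy)))
    (εy εy' : ℝ) (h0 : 0 ≤ εy) (hlt : εy < εy') (h1 : εy' ≤ 1)
    (hpe : p εy' < 1 / Real.exp 1) :
    H εy < H εy' := by
  have hn1 : (1:ℝ) ≤ (n:ℝ) := by exact_mod_cast hn
  have hn0 : (0:ℝ) < (n:ℝ) := by linarith
  have hA : (0:ℝ) < (n + 1 : ℝ) - n * εx := by nlinarith [hεx.2]
  have hy1 : εy < 1 := lt_of_lt_of_le hlt h1
  have hD : (0:ℝ) < (n + 1 : ℝ) - n * εy := by nlinarith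
  have hD' : (0:ℝ) < (n + 1 : ℝ) - n * εy' := by nlinarith
  have hpos : 0 < p εy := by
    rw [hp]
    apply div_pos
    · nlinarith [mul_nonneg (mul_nonneg hn0.le (by linarith [hεx.2] : (0:ℝ) ≤ 1 - εx))
        (by linarith : (0:ℝ) ≤ 1 - εy)]
    · exact mul_pos hA hD
  have hmono : p εy < p εy' := by
    rw [hp, hp, div_lt_div_iff₀ (mul_pos hA hD) (mul_pos hA hD')]
    nlinarith [mul_pos hA (mul_pos (sub_pos.2 hlt) (mul_pos hn0 hεx.1))]
  have he : p εy' < Real.exp (-1) := by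
    rw [Real.exp_neg]
    rw [one_div] at hpe
    exact hpe
  have hmemy : p εy ∈ Set.Icc (0:ℝ) (Real.exp (-1)) :=
    ⟨hpos.le, le_of_lt (hmono.trans he)⟩
  have hmemy' : p εy' ∈ Set.Icc (0:ℝ) (Real.exp (-1)) :=
    ⟨(hpos.trans hmono).le, he.le⟩
  have key := negMulLog_strictMonoOn hmemy hmemy' hmono
  rw [hH, hH]
  have hn1' : (0:ℝ) < (n:ℝ) + 1 := by linarith
  calc -((n + 1 : ℝ) * p εy * Real.log (p εy))
      = ((n:ℝ) + 1) * (-(p εy * Real.log (p εy))) := by ring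
    _ < ((n:ℝ) + 1) * (-(p εy' * Real.log (p εy'))) := by
        exact mul_lt_mul_of_pos_left key hn1'
    _ = -((n + 1 : ℝ) * p εy' * Real.log (p εy')) := by ring
end
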